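/- arXiv:1703.10210 — 3 statements merged into one kernel-verified Lean document; each statement's English description precedes it below -/
import Mathlib

section
/- Let H1, H2 be real separable Hilbert spaces and let X be a square-integrable random element of H1 ⊗ H2 with mean μ. Suppose orthonormal bases (f_j) of H1 and (g_k) of H2 make the scores χ_{jk} = ⟨X − μ, f_j ⊗ g_k⟩ uncorrelated for distinct index pairs. Then each f_j is an eigenvector of the marginal covariance operator C_S on H1 with eigenvalue λ_j = Σ_k η_{jk}, where η_{jk} = E[χ_{jk}^2] and C_S is defined by ⟨C_S u, v⟩ = Σ_k E[⟨X−μ, u ⊗ g_k⟩⟨X−μ, v ⊗ g_k⟩] for u, v ∈ H1 (equivalently C_S = tr_2(C), the partial trace of the covariance over H2). -/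
open MeasureTheory RealInnerProductSpace

theorem Orthonormal.eq_smul_of_inner_eq_ite {E ι : Type*} [NormedAddCommGroup E]
    [InnerProductSpace ℝ E] [DecidableEq ι] {f : ι → E} (hf : Orthonormal ℝ f)
    (hf_total : ∀ v : E, (∀ i, ⟪f i, v⟫ = 0) → v = 0) {v : E} {j : ι} {c : ℝ}
    (hv : ∀ i, ⟪v, f i⟫ = if i = j then c else 0) :
    v = c • f j := by
  refine sub_eq_zero.mp (hf_total _ fun i => ?_)
  rw [inner_sub_right, inner_smul_right, real_inner_comm, hv, orthonormal_iff_ite.mp hf]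
  split_ifs <;> simp

theorem weak_separability_marginal_eigenvectors_general
    {H1 H2 H : Type*}
    [NormedAddCommGroup H1] [InnerProductSpace ℝ H1]
    [NormedAddCommGroup H] [InnerProductSpace ℝ H]
    {Ω : Type*} [MeasurableSpace Ω] (P : Measure Ω)
    (X : Ω → H) (μ : H)
    (tp : H1 → H2 → H)
    (f : ℕ → H1) (g : ℕ → H2)
    (hf : Orthonormal ℝ f)
    (hf_total : ∀ v : H1, (∀ j, ⟪f j, v⟫ = 0) → v = 0)
    (huncorr : ∀ j k j' k', (j, k) ≠ (j', k') →
      (∫ ω, ⟪X ω - μ, tp (f j) (g k)⟫ * ⟪X ω - μ, tp (f j') (g k')⟫ ∂P) = 0)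
    (CS : H1 →L[ℝ] H1)
    (hCS : ∀ u v : H1, ⟪CS u, v⟫ =
      ∑' k, ∫ ω, ⟪X ω - μ, tp u (g k)⟫ * ⟪X ω - μ, tp v (g k)⟫ ∂P) :
    ∀ j, CS (f j) =
      (∑' k, ∫ ω, ⟪X ω - μ, tp (f j) (g k)⟫ ^ 2 ∂P) • f j := by
  intro j
  refine hf.eq_smul_of_inner_eq_ite hf_total fun i => ?_
  rw [hCS]
  split_ifs with hij
  · subst hij
    simp only [sq]
  · simp [huncorr j _ i _ (by simp [Ne.symm hij])]

/-- Under weak separability, each `f j` is an eigenvector of the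
marginal covariance operator `C_S = tr₂(C)` with eigenvalue `λ_j = Σ_k η_{jk}`. -/
theorem weak_separability_marginal_eigenvectors
    {H1 H2 H : Type*}
    [NormedAddCommGroup H1] [InnerProductSpace ℝ H1]
    [NormedAddCommGroup H2] [InnerProductSpace ℝ H2]
    [NormedAddCommGroup H] [InnerProductSpace ℝ H]
    {Ω : Type*} [MeasurableSpace Ω] (P : Measure Ω) [IsProbabilityMeasure P]
    (X : Ω → H) (μ : H)
    (tp : H1 → H2 → H)
    (h_tp : ∀ x1 x2 y1 y2, ⟪tp x1 x2, tp y1 y2⟫ = ⟪x1, y1⟫ * ⟪x2, y2⟫)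
    (f : ℕ → H1) (g : ℕ → H2)
    (hf : Orthonormal ℝ f) (hg : Orthonormal ℝ g)
    (hf_total : ∀ v : H1, (∀ j, ⟪f j, v⟫ = 0) → v = 0)
    (huncorr : ∀ j k j' k', (j, k) ≠ (j', k') →
      (∫ ω, ⟪X ω - μ, tp (f j) (g k)⟫ * ⟪X ω - μ, tp (f j') (g k')⟫ ∂P) = 0)
    (CS : H1 →L[ℝ] H1)
    (hCS : ∀ u v : H1, ⟪CS u, v⟫ =
      ∑' k, ∫ ω, ⟪X ω - μ, tp u (g k)⟫ * ⟪X ω - μ, tp v (g k)⟫ ∂P) :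
    ∀ j, CS (f j) =
      (∑' k, ∫ ω, ⟪X ω - μ, tp (f j) (g k)⟫ ^ 2 ∂P) • f j :=
  weak_separability_marginal_eigenvectors_general P X μ tp f g hf hf_total huncorr CS hCS
end

section
/- Strong separability implies weak separability: let X be a square-integrable random element of H1 ⊗ H2 with mean μ and covariance operator C. Suppose C = a · (C1 ⊗̃ C2) for trace-class positive self-adjoint operators C1 on H1, C2 on H2 with tr(C1) = tr(C2) = 1 and a > 0, where C1 ⊗̃ C2 denotes the tensor product operator. Let (ψ_j) and (φ_k) be orthonormal eigenbases of C1 and C2 respectively. Then the scores χ_{jk} = ⟨X − μ, ψ_j ⊗ φ_k⟩ are uncorrelated: E[χ_{jk} χ_{j'k'}] = 0 whenever (j,k) ≠ (j',k'). -/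
open MeasureTheory RealInnerProductSpace

section TensorProductInner

variable {H1 H2 H : Type*}
  [NormedAddCommGroup H1] [InnerProductSpace ℝ H1]
  [NormedAddCommGroup H2] [InnerProductSpace ℝ H2]
  [NormedAddCommGroup H] [InnerProductSpace ℝ H]
  {tp : H1 → H2 → H}

theorem Orthonormal.tensor {ι κ : Type*} {ψ : ι → H1} {φ : κ → H2}
    (h_tp : ∀ x1 x2 y1 y2, ⟪tp x1 x2, tp y1 y2⟫ = ⟪x1, y1⟫ * ⟪x2, y2⟫)
    (hψ : Orthonormal ℝ ψ) (hφ : Orthonormal ℝ φ) :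
    Orthonormal ℝ fun p : ι × κ => tp (ψ p.1) (φ p.2) := by
  classical
  rw [orthonormal_iff_ite] at hψ hφ ⊢
  rintro ⟨j, k⟩ ⟨j', k'⟩
  simp only [h_tp, hψ, hφ, Prod.mk.injEq, ite_zero_mul_ite_zero, one_mul]

theorem inner_apply_tensor_of_eigen {C : H →L[ℝ] H} {C1 : H1 →L[ℝ] H1} {C2 : H2 →L[ℝ] H2}
    (h_tp : ∀ x1 x2 y1 y2, ⟪tp x1 x2, tp y1 y2⟫ = ⟪x1, y1⟫ * ⟪x2, y2⟫)
    {a l g : ℝ} {x x' : H1} {y y' : H2}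
    (hsep : C (tp x y) = a • tp (C1 x) (C2 y))
    (hx : C1 x = l • x) (hy : C2 y = g • y) :
    ⟪C (tp x y), tp x' y'⟫ = a * l * g * ⟪tp x y, tp x' y'⟫ := by
  rw [hsep, hx, hy, real_inner_smul_left, h_tp, h_tp, real_inner_smul_left,
    real_inner_smul_left]
  ring

end TensorProductInner

theorem strong_implies_weak_separability_general
    {H1 H2 H : Type*}
    [NormedAddCommGroup H1] [InnerProductSpace ℝ H1]
    [NormedAddCommGroup H2] [InnerProductSpace ℝ H2]
    [NormedAddCommGroup H] [InnerProductSpace ℝ H]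
    {Ω : Type*} [MeasurableSpace Ω] (P : Measure Ω)
    (X : Ω → H) (μ : H) (C : H →L[ℝ] H)
    (tp : H1 → H2 → H)
    (h_tp : ∀ x1 x2 y1 y2, ⟪tp x1 x2, tp y1 y2⟫ = ⟪x1, y1⟫ * ⟪x2, y2⟫)
    (hC : ∀ a b : H, ⟪C a, b⟫ = ∫ ω, ⟪X ω - μ, a⟫ * ⟪X ω - μ, b⟫ ∂P)
    (C1 : H1 →L[ℝ] H1) (C2 : H2 →L[ℝ] H2)
    (a : ℝ)
    -- strong separability: C = a · (C1 ⊗̃ C2)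
    (hsep : ∀ (x : H1) (y : H2), C (tp x y) = a • tp (C1 x) (C2 y))
    -- orthonormal eigenbases of C1 and C2
    (ψ : ℕ → H1) (φ : ℕ → H2)
    (hψ : Orthonormal ℝ ψ) (hφ : Orthonormal ℝ φ)
    (lam gam : ℕ → ℝ)
    (heig1 : ∀ j, C1 (ψ j) = lam j • ψ j)
    (heig2 : ∀ k, C2 (φ k) = gam k • φ k) :
    ∀ j k j' k', (j, k) ≠ (j', k') →
      (∫ ω, ⟪X ω - μ, tp (ψ j) (φ k)⟫ * ⟪X ω - μ, tp (ψ j') (φ k')⟫ ∂P) = 0 := by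
  intro j k j' k' hne
  rw [← hC, inner_apply_tensor_of_eigen h_tp (hsep _ _) (heig1 j) (heig2 k),
    (hψ.tensor h_tp hφ).2 hne, mul_zero]

/-- Strong separability (`C = a · C1 ⊗̃ C2` with unit-trace positive
self-adjoint trace-class factors) implies weak separability: the scores along
eigenbases of `C1` and `C2` are uncorrelated. -/
theorem strong_implies_weak_separability
    {H1 H2 H : Type*}
    [NormedAddCommGroup H1] [InnerProductSpace ℝ H1] [CompleteSpace H1]
    [NormedAddCommGroup H2] [InnerProductSpace ℝ H2] [CompleteSpace H2]
    [NormedAddCommGroup H] [InnerProductSpace ℝ H] [CompleteSpace H]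
    {Ω : Type*} [MeasurableSpace Ω] (P : Measure Ω) [IsProbabilityMeasure P]
    (X : Ω → H) (μ : H) (C : H →L[ℝ] H)
    (tp : H1 → H2 → H)
    (h_tp : ∀ x1 x2 y1 y2, ⟪tp x1 x2, tp y1 y2⟫ = ⟪x1, y1⟫ * ⟪x2, y2⟫)
    (hC : ∀ a b : H, ⟪C a, b⟫ = ∫ ω, ⟪X ω - μ, a⟫ * ⟪X ω - μ, b⟫ ∂P)
    (C1 : H1 →L[ℝ] H1) (C2 : H2 →L[ℝ] H2)
    (hC1sa : IsSelfAdjoint C1) (hC2sa : IsSelfAdjoint C2)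
    (hC1pos : ∀ x, 0 ≤ ⟪C1 x, x⟫) (hC2pos : ∀ y, 0 ≤ ⟪C2 y, y⟫)
    (a : ℝ) (ha : 0 < a)
    -- strong separability: C = a · (C1 ⊗̃ C2)
    (hsep : ∀ (x : H1) (y : H2), C (tp x y) = a • tp (C1 x) (C2 y))
    -- orthonormal eigenbases of C1 and C2
    (ψ : ℕ → H1) (φ : ℕ → H2)
    (hψ : Orthonormal ℝ ψ) (hφ : Orthonormal ℝ φ)
    (lam gam : ℕ → ℝ)
    (heig1 : ∀ j, C1 (ψ j) = lam j • ψ j)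
    (heig2 : ∀ k, C2 (φ k) = gam k • φ k)
    -- unit traces: tr(C1) = tr(C2) = 1
    (htr1 : ∑' j, lam j = 1) (htr2 : ∑' k, gam k = 1) :
    ∀ j k j' k', (j, k) ≠ (j', k') →
      (∫ ω, ⟪X ω - μ, tp (ψ j) (φ k)⟫ * ⟪X ω - μ, tp (ψ j') (φ k')⟫ ∂P) = 0 :=
  strong_implies_weak_separability_general P X μ C tp h_tp hC C1 C2 a hsep ψ φ hψ hφ lam gam heig1
    heig2
end

section
/- Generalized uncorrelatedness of marginal projection scores (no weak separability assumed): let X be a square-integrable random element of H1 ⊗ H2 with mean μ and covariance C, let (ψ_j) be an orthonormal eigenbasis of the marginal covariance C_S = tr_2(C), and (φ_k) any orthonormal basis of H2, with scores χ_{jk} = ⟨X−μ, ψ_j ⊗ φ_k⟩. Then for j ≠ j', Σ_{k=1}^∞ E[χ_{jk} χ_{j'k}] = 0, the series converging absolutely. -/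
open MeasureTheory RealInnerProductSpace

/- The scores `χ_{jk} χ_{j'k}` are dominated, uniformly in finite sets of `k`, by Bessel's
inequality for the orthonormal families `k ↦ ψ_j ⊗ φ_k`, `k ↦ ψ_{j'} ⊗ φ_k`: pointwise
`Σ_k |χ_{jk} χ_{j'k}| ≤ ‖X - μ‖²`, which is integrable. Hence the series of expectations
converges absolutely, and its sum is `⟪C_S ψ_j, ψ_{j'}⟫ = λ_j ⟪ψ_j, ψ_{j'}⟫ = 0`. -/

theorem Orthonormal.sum_abs_inner_mul_inner_le {E ι : Type*} [NormedAddCommGroup E]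
    [InnerProductSpace ℝ E] {e f : ι → E} (he : Orthonormal ℝ e) (hf : Orthonormal ℝ f)
    (x : E) (s : Finset ι) :
    ∑ i ∈ s, |⟪x, e i⟫ * ⟪x, f i⟫| ≤ ‖x‖ ^ 2 := by
  have bessel : ∀ {v : ι → E}, Orthonormal ℝ v → ∑ i ∈ s, ⟪x, v i⟫ ^ 2 ≤ ‖x‖ ^ 2 :=
    fun hv => by simpa [real_inner_comm] using hv.sum_inner_products_le x (s := s)
  have amgm : ∀ a b : ℝ, |a * b| ≤ (a ^ 2 + b ^ 2) / 2 := fun a b => by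
    rw [abs_mul, ← sq_abs a, ← sq_abs b]
    nlinarith [sq_nonneg (|a| - |b|)]
  calc ∑ i ∈ s, |⟪x, e i⟫ * ⟪x, f i⟫|
      ≤ ∑ i ∈ s, (⟪x, e i⟫ ^ 2 + ⟪x, f i⟫ ^ 2) / 2 := Finset.sum_le_sum fun i _ => amgm _ _
    _ = ((∑ i ∈ s, ⟪x, e i⟫ ^ 2) + ∑ i ∈ s, ⟪x, f i⟫ ^ 2) / 2 := by
      rw [← Finset.sum_div, Finset.sum_add_distrib]
    _ ≤ ‖x‖ ^ 2 := by linarith [bessel he, bessel hf]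

theorem orthonormal_tp_left {H1 H2 H ι : Type*}
    [NormedAddCommGroup H1] [InnerProductSpace ℝ H1]
    [NormedAddCommGroup H2] [InnerProductSpace ℝ H2]
    [NormedAddCommGroup H] [InnerProductSpace ℝ H]
    (tp : H1 → H2 → H) (h_tp : ∀ x1 x2 y1 y2, ⟪tp x1 x2, tp y1 y2⟫ = ⟪x1, y1⟫ * ⟪x2, y2⟫)
    {u : H1} (hu : ‖u‖ = 1) {v : ι → H2} (hv : Orthonormal ℝ v) :
    Orthonormal ℝ fun i => tp u (v i) := by
  classical
  rw [orthonormal_iff_ite] at hv ⊢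
  intro i j
  rw [h_tp, hv i j, real_inner_self_eq_norm_sq, hu, one_pow, one_mul]

namespace MeasureTheory

theorem sum_lintegral_le_lintegral_sum {α ι : Type*} [MeasurableSpace α] {μ : Measure α}
    (s : Finset ι) (f : ι → α → ENNReal) :
    ∑ i ∈ s, ∫⁻ a, f i a ∂μ ≤ ∫⁻ a, ∑ i ∈ s, f i a ∂μ := by
  classical
  induction s using Finset.induction_on with
  | empty => simp
  | insert i s hi ih =>
    simp only [Finset.sum_insert hi]
    exact (add_le_add le_rfl ih).trans (le_lintegral_add _ _)

/- No measurability of `g` is assumed (the scores of a possibly non-measurable `X`); the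
Lebesgue-integral bounds used below hold for arbitrary functions. -/
theorem summable_abs_integral_of_sum_abs_le {α ι : Type*} [MeasurableSpace α]
    {μ : Measure α} {g : ι → α → ℝ} {F : α → ℝ} (hF : Integrable F μ)
    (hg : ∀ s a, ∑ i ∈ s, |g i a| ≤ F a) :
    Summable fun i => |∫ a, g i a ∂μ| := by
  have hF_nonneg : ∀ a, 0 ≤ F a := fun a => by simpa using hg ∅ a
  have hF_lt_top : ∫⁻ a, ENNReal.ofReal (F a) ∂μ < ⊤ := hF.lintegral_lt_top
  have hg_lt_top : ∀ i, ∫⁻ a, ENNReal.ofReal ‖g i a‖ ∂μ ≠ ⊤ := fun i =>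
    (lt_of_le_of_lt (lintegral_mono fun a => ENNReal.ofReal_le_ofReal <| by
      simpa using hg {i} a) hF_lt_top).ne
  refine summable_of_sum_le (c := ∫ a, F a ∂μ) (fun _ => abs_nonneg _) fun s => ?_
  calc ∑ i ∈ s, |∫ a, g i a ∂μ|
      ≤ ∑ i ∈ s, (∫⁻ a, ENNReal.ofReal ‖g i a‖ ∂μ).toReal :=
        Finset.sum_le_sum fun i _ =>
          (Real.norm_eq_abs _).ge.trans (norm_integral_le_lintegral_norm _)
    _ = (∑ i ∈ s, ∫⁻ a, ENNReal.ofReal ‖g i a‖ ∂μ).toReal :=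
        (ENNReal.toReal_sum fun i _ => hg_lt_top i).symm
    _ ≤ (∫⁻ a, ENNReal.ofReal (F a) ∂μ).toReal := by
        refine ENNReal.toReal_mono hF_lt_top.ne
          ((sum_lintegral_le_lintegral_sum s _).trans (lintegral_mono fun a => ?_))
        rw [← ENNReal.ofReal_sum_of_nonneg fun i _ => norm_nonneg _]
        exact ENNReal.ofReal_le_ofReal (hg s a)
    _ = ∫ a, F a ∂μ :=
        (integral_eq_lintegral_of_nonneg_ae (.of_forall hF_nonneg) hF.1).symm

end MeasureTheory

theorem marginal_scores_generalized_uncorrelated_general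
    {H1 H2 H : Type*}
    [NormedAddCommGroup H1] [InnerProductSpace ℝ H1]
    [NormedAddCommGroup H2] [InnerProductSpace ℝ H2]
    [NormedAddCommGroup H] [InnerProductSpace ℝ H]
    {Ω : Type*} [MeasurableSpace Ω] (P : Measure Ω)
    (X : Ω → H) (μ : H)
    (tp : H1 → H2 → H)
    (h_tp : ∀ x1 x2 y1 y2, ⟪tp x1 x2, tp y1 y2⟫ = ⟪x1, y1⟫ * ⟪x2, y2⟫)
    (ψ : ℕ → H1) (hψ : Orthonormal ℝ ψ)
    (φ : HilbertBasis ℕ ℝ H2)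
    -- integrability of X
    (hX : Integrable (fun ω => ‖X ω - μ‖ ^ 2) P)
    -- C_S = tr₂(C): the marginal covariance operator
    (CS : H1 →L[ℝ] H1)
    (hCS : ∀ u v : H1, ⟪CS u, v⟫ =
      ∑' k, ∫ ω, ⟪X ω - μ, tp u (φ k)⟫ * ⟪X ω - μ, tp v (φ k)⟫ ∂P)
    -- (ψ_j) is an eigenbasis of C_S
    (lam : ℕ → ℝ) (heig : ∀ j, CS (ψ j) = lam j • ψ j) :
    ∀ j j', j ≠ j' →
      (Summable fun k =>
        |∫ ω, ⟪X ω - μ, tp (ψ j) (φ k)⟫ * ⟪X ω - μ, tp (ψ j') (φ k)⟫ ∂P|) ∧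
      (∑' k, ∫ ω, ⟪X ω - μ, tp (ψ j) (φ k)⟫ * ⟪X ω - μ, tp (ψ j') (φ k)⟫ ∂P) = 0 := by
  intro j j' hjj'
  refine ⟨summable_abs_integral_of_sum_abs_le hX fun s ω => ?_, ?_⟩
  · exact (orthonormal_tp_left tp h_tp (hψ.1 j) φ.orthonormal).sum_abs_inner_mul_inner_le
      (orthonormal_tp_left tp h_tp (hψ.1 j') φ.orthonormal) (X ω - μ) s
  · rw [← hCS, heig, real_inner_smul_left, hψ.2 hjj', mul_zero]

/-- Generalized uncorrelatedness of marginal projection scores (no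
weak separability assumed): if `(ψ_j)` is an orthonormal eigenbasis of the
marginal covariance `C_S = tr₂(C)` and `(φ_k)` any orthonormal basis of `H2`,
then for `j ≠ j'`, `Σ_k E[χ_{jk} χ_{j'k}] = 0`, absolutely convergent. -/
theorem marginal_scores_generalized_uncorrelated
    {H1 H2 H : Type*}
    [NormedAddCommGroup H1] [InnerProductSpace ℝ H1]
    [NormedAddCommGroup H2] [InnerProductSpace ℝ H2]
    [NormedAddCommGroup H] [InnerProductSpace ℝ H]
    {Ω : Type*} [MeasurableSpace Ω] (P : Measure Ω) [IsProbabilityMeasure P]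
    (X : Ω → H) (μ : H)
    (tp : H1 → H2 → H)
    (h_tp : ∀ x1 x2 y1 y2, ⟪tp x1 x2, tp y1 y2⟫ = ⟪x1, y1⟫ * ⟪x2, y2⟫)
    (ψ : ℕ → H1) (hψ : Orthonormal ℝ ψ)
    (φ : HilbertBasis ℕ ℝ H2)
    -- integrability of X
    (hX : Integrable (fun ω => ‖X ω - μ‖ ^ 2) P)
    -- C_S = tr₂(C): the marginal covariance operator
    (CS : H1 →L[ℝ] H1)
    (hCS : ∀ u v : H1, ⟪CS u, v⟫ =
      ∑' k, ∫ ω, ⟪X ω - μ, tp u (φ k)⟫ * ⟪X ω - μ, tp v (φ k)⟫ ∂P)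
    -- (ψ_j) is an eigenbasis of C_S
    (lam : ℕ → ℝ) (heig : ∀ j, CS (ψ j) = lam j • ψ j) :
    ∀ j j', j ≠ j' →
      (Summable fun k =>
        |∫ ω, ⟪X ω - μ, tp (ψ j) (φ k)⟫ * ⟪X ω - μ, tp (ψ j') (φ k)⟫ ∂P|) ∧
      (∑' k, ∫ ω, ⟪X ω - μ, tp (ψ j) (φ k)⟫ * ⟪X ω - μ, tp (ψ j') (φ k)⟫ ∂P) = 0 :=
  marginal_scores_generalized_uncorrelated_general P X μ tp h_tp ψ hψ φ hX CS hCS lam heig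
end
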